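/- arXiv:2208.13357 — 5 statements merged into one kernel-verified Lean document; each statement's English description precedes it below -/
import Mathlib

section
/- For every integer m ≥ 3, the diagonal 2-color Ramsey number satisfies R(m, m) > 2^{m/2}; equivalently, R(m, m)^2 > 2^m. -/
open Finset

/-- An edge `r`-coloring of the complete graph on `Fin n` admits, for some color `s`,
a monochromatic set of size `i s` in color `s`. -/
def RamseyProp {r : ℕ} (n : ℕ) (i : Fin r → ℕ) : Prop :=
  ∀ c : Sym2 (Fin n) → Fin r, ∃ s : Fin r, ∃ S : Finset (Fin n),
    S.card = i s ∧ ∀ x ∈ S, ∀ y ∈ S, x ≠ y → c s(x, y) = s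

/-- The `r`-color Ramsey number `R(i 0, …, i (r-1))`: the least `n` such that every
edge `r`-coloring of `K_n` has a monochromatic `K_{i s}` in some color `s`. -/
noncomputable def ramseyNumber {r : ℕ} (i : Fin r → ℕ) : ℕ :=
  sInf {n | RamseyProp n i}


/-- Monochromaticity of `S` in color `s` for a 2-coloring of pairs of naturals. -/
def MonoOn (c : Sym2 ℕ → Fin 2) (s : Fin 2) (S : Finset ℕ) : Prop :=
  ∀ x ∈ S, ∀ y ∈ S, x ≠ y → c s(x, y) = s

lemma ramsey_exists : ∀ a b : ℕ, ∃ n : ℕ, ∀ (V : Finset ℕ) (c : Sym2 ℕ → Fin 2),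
    n ≤ V.card → ∃ S ⊆ V, (S.card = a ∧ MonoOn c 0 S) ∨ (S.card = b ∧ MonoOn c 1 S) := by
  suffices h : ∀ k a b, a + b ≤ k → ∃ n : ℕ, ∀ (V : Finset ℕ) (c : Sym2 ℕ → Fin 2),
      n ≤ V.card → ∃ S ⊆ V, (S.card = a ∧ MonoOn c 0 S) ∨ (S.card = b ∧ MonoOn c 1 S) by
    exact fun a b => h (a + b) a b le_rfl
  intro k
  induction k with
  | zero =>
    intro a b hab
    refine ⟨0, fun V c _ => ⟨∅, empty_subset V, Or.inl ⟨by simp; omega, ?_⟩⟩⟩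
    intro x hx; simp at hx
  | succ k ih =>
    intro a b hab
    match a, b with
    | 0, b =>
      refine ⟨0, fun V c _ => ⟨∅, empty_subset V, Or.inl ⟨rfl, ?_⟩⟩⟩
      intro x hx; simp at hx
    | a + 1, 0 =>
      refine ⟨0, fun V c _ => ⟨∅, empty_subset V, Or.inr ⟨rfl, ?_⟩⟩⟩
      intro x hx; simp at hx
    | a + 1, b + 1 =>
      obtain ⟨n1, h1⟩ := ih a (b + 1) (by omega)
      obtain ⟨n2, h2⟩ := ih (a + 1) b (by omega)
      refine ⟨n1 + n2 + 1, fun V c hV => ?_⟩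
      obtain ⟨v, hv⟩ : V.Nonempty := card_pos.mp (by omega)
      set W := V.erase v with hWdef
      have hWcard : n1 + n2 ≤ W.card := by
        rw [hWdef, card_erase_of_mem hv]; omega
      set A0 := W.filter (fun x => c s(v, x) = 0) with hA0
      set A1 := W.filter (fun x => ¬ (c s(v, x) = 0)) with hA1
      have hsplit : A0.card + A1.card = W.card :=
        card_filter_add_card_filter_not _
      have htwo : ∀ t : Fin 2, ¬ t = 0 → t = 1 := by decide
      have hone : ∀ x, ¬ (c s(v, x) = 0) → c s(v, x) = 1 := fun x hx => htwo _ hx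
      rcases le_or_gt n1 A0.card with hc0 | hc0
      · obtain ⟨S, hSA, hS⟩ := h1 A0 c hc0
        have hSW : S ⊆ W := hSA.trans (filter_subset _ _)
        have hvS : v ∉ S := fun h => (mem_erase.mp (hSW h)).1 rfl
        rcases hS with ⟨hcard, hmono⟩ | ⟨hcard, hmono⟩
        · refine ⟨insert v S, ?_, Or.inl ⟨?_, ?_⟩⟩
          · exact insert_subset hv (hSW.trans (erase_subset _ _))
          · rw [card_insert_of_notMem hvS, hcard]
          · intro x hx y hy hxy
            rcases mem_insert.mp hx with rfl | hx'
            · rcases mem_insert.mp hy with rfl | hy'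
              · exact absurd rfl hxy
              · exact (mem_filter.mp (hSA hy')).2
            · rcases mem_insert.mp hy with rfl | hy'
              · rw [Sym2.eq_swap]; exact (mem_filter.mp (hSA hx')).2
              · exact hmono x hx' y hy' hxy
        · exact ⟨S, hSW.trans ((erase_subset _ _)), Or.inr ⟨hcard, hmono⟩⟩
      · have hc1 : n2 ≤ A1.card := by omega
        obtain ⟨S, hSA, hS⟩ := h2 A1 c hc1
        have hSW : S ⊆ W := hSA.trans (filter_subset _ _)
        have hvS : v ∉ S := fun h => (mem_erase.mp (hSW h)).1 rfl
        rcases hS with ⟨hcard, hmono⟩ | ⟨hcard, hmono⟩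
        · exact ⟨S, hSW.trans ((erase_subset _ _)), Or.inl ⟨hcard, hmono⟩⟩
        · refine ⟨insert v S, ?_, Or.inr ⟨?_, ?_⟩⟩
          · exact insert_subset hv (hSW.trans (erase_subset _ _))
          · rw [card_insert_of_notMem hvS, hcard]
          · intro x hx y hy hxy
            rcases mem_insert.mp hx with rfl | hx'
            · rcases mem_insert.mp hy with rfl | hy'
              · exact absurd rfl hxy
              · exact hone y (mem_filter.mp (hSA hy')).2
            · rcases mem_insert.mp hy with rfl | hy'
              · rw [Sym2.eq_swap]; exact hone x (mem_filter.mp (hSA hx')).2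
              · exact hmono x hx' y hy' hxy

lemma fact_sq {m : ℕ} (hm : 3 ≤ m) : 2 ^ (m + 2) < (m.factorial) ^ 2 := by
  induction m, hm using Nat.le_induction with
  | base => norm_num [Nat.factorial]
  | succ n hn ih =>
    have h2 : 2 ≤ (n + 1) ^ 2 := by nlinarith
    calc 2 ^ (n + 1 + 2) = 2 * 2 ^ (n + 2) := by ring
    _ < 2 * (n.factorial) ^ 2 := by omega
    _ ≤ (n + 1) ^ 2 * (n.factorial) ^ 2 := Nat.mul_le_mul_right _ h2
    _ = ((n + 1).factorial) ^ 2 := by rw [Nat.factorial_succ]; ring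

lemma key_ineq {m k : ℕ} (hm : 3 ≤ m) (hk : k ^ 2 ≤ 2 ^ m) :
    2 * k.choose m < 2 ^ (m.choose 2) := by
  obtain ⟨m', rfl⟩ : ∃ m', m = m' + 3 := ⟨m - 3, by omega⟩
  set m := m' + 3 with hmdef
  have h1 : k.choose m * m.factorial ≤ k ^ m := by
    calc k.choose m * m.factorial = m.factorial * k.choose m := mul_comm _ _
    _ = k.descFactorial m := (Nat.descFactorial_eq_factorial_mul_choose _ _).symm
    _ ≤ k ^ m := Nat.descFactorial_le_pow _ _
  have hdd : 2 * m.choose 2 + m = m * m := by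
    rw [Nat.choose_two_right]
    have hev : 2 * (m * (m - 1) / 2) = m * (m - 1) := by
      refine Nat.two_mul_div_two_of_even ?_
      show Even ((m' + 3) * (m' + 2))
      rw [mul_comm]
      exact Nat.even_mul_succ_self (m' + 2)
    rw [hev]
    have e1 : m - 1 = m' + 2 := by omega
    rw [e1, hmdef]
    ring
  have hsq : (2 * k.choose m * m.factorial) ^ 2 < (2 ^ (m.choose 2) * m.factorial) ^ 2 := by
    calc (2 * k.choose m * m.factorial) ^ 2
        = 4 * (k.choose m * m.factorial) ^ 2 := by ring
    _ ≤ 4 * (k ^ m) ^ 2 := by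
        have := Nat.pow_le_pow_left h1 2
        omega
    _ = 4 * (k ^ 2) ^ m := by rw [← pow_mul, ← pow_mul, mul_comm m 2]
    _ ≤ 4 * (2 ^ m) ^ m := by
        have := Nat.pow_le_pow_left hk m
        omega
    _ = 2 ^ (m * m + 2) := by
        rw [← pow_mul, show m * m + 2 = 2 + m * m by ring, pow_add]
        norm_num
    _ = 2 ^ (2 * m.choose 2) * 2 ^ (m + 2) := by
        rw [← pow_add]
        congr 1
        omega
    _ < 2 ^ (2 * m.choose 2) * (m.factorial) ^ 2 := by
        rw [mul_comm, mul_comm (2 ^ (2 * m.choose 2))]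
        exact Nat.mul_lt_mul_of_lt_of_le (fact_sq (by omega)) (le_refl _)
          (pow_pos (by norm_num : (0:ℕ) < 2) _)
    _ = (2 ^ (m.choose 2) * m.factorial) ^ 2 := by
        rw [mul_pow, ← pow_mul, mul_comm (m.choose 2) 2]
  have hlt : 2 * k.choose m * m.factorial < 2 ^ (m.choose 2) * m.factorial := by
    by_contra hle
    push_neg at hle
    exact absurd (Nat.pow_le_pow_left hle 2) (not_le.mpr hsq)
  exact Nat.lt_of_mul_lt_mul_right hlt

lemma card_filter_mono {k m : ℕ} (s : Fin 2) (S : Finset (Fin k)) (hS : S.card = m) :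
    (univ.filter (fun c : Sym2 (Fin k) → Fin 2 =>
      ∀ x ∈ S, ∀ y ∈ S, x ≠ y → c s(x, y) = s)).card
      = 2 ^ (Fintype.card (Sym2 (Fin k)) - m.choose 2) := by
  classical
  set D := S.sym2.filter (fun e => ¬ e.IsDiag) with hD
  have hDmem : ∀ x y : Fin k, (s(x, y) ∈ D ↔ (x ∈ S ∧ y ∈ S ∧ x ≠ y)) := by
    intro x y
    simp [hD, mem_filter, mk_mem_sym2_iff, Sym2.mk_isDiag_iff, and_assoc]
  have hset : univ.filter (fun c : Sym2 (Fin k) → Fin 2 =>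
      ∀ x ∈ S, ∀ y ∈ S, x ≠ y → c s(x, y) = s)
      = Fintype.piFinset (fun e => if e ∈ D then {s} else univ) := by
    ext c
    simp only [mem_filter, mem_univ, true_and, Fintype.mem_piFinset]
    constructor
    · intro hc e
      by_cases he : e ∈ D
      · rw [if_pos he]
        induction e using Sym2.ind with
        | _ x y =>
          obtain ⟨hx, hy, hxy⟩ := (hDmem x y).mp he
          simp [hc x hx y hy hxy]
      · rw [if_neg he]; exact mem_univ _
    · intro hc x hx y hy hxy
      have := hc s(x, y)
      rw [if_pos ((hDmem x y).mpr ⟨hx, hy, hxy⟩)] at this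
      simpa using this
  have hdiag : S.sym2.filter (fun e => e.IsDiag) = S.image Sym2.diag := by
    ext e
    induction e using Sym2.ind with
    | _ x y =>
      simp only [mem_filter, mk_mem_sym2_iff, Sym2.mk_isDiag_iff, mem_image, Sym2.diag]
      constructor
      · rintro ⟨⟨hx, -⟩, rfl⟩; exact ⟨x, hx, rfl⟩
      · rintro ⟨a, ha, he⟩
        rw [Sym2.eq_iff] at he
        rcases he with ⟨rfl, rfl⟩ | ⟨rfl, rfl⟩ <;> exact ⟨⟨ha, ha⟩, rfl⟩
  have hDcard : D.card = m.choose 2 := by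
    rw [hD, Finset.filter_not, hdiag, card_sdiff_of_subset (hdiag ▸ filter_subset _ _), card_sym2, hS,
      card_image_of_injective _ Sym2.diag_injective, hS, Nat.choose_succ_succ,
      Nat.choose_one_right]
    have h2 : Nat.succ 1 = 2 := rfl
    rw [h2]
    omega
  rw [hset, Fintype.card_piFinset]
  have hval : ∀ e : Sym2 (Fin k),
      (if e ∈ D then ({s} : Finset (Fin 2)) else univ).card = if e ∈ D then 1 else 2 := by
    intro e; split <;> simp
  rw [Finset.prod_congr rfl (fun e _ => hval e), Finset.prod_ite, Finset.prod_const,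
    Finset.prod_const, one_pow, one_mul]
  have hfiltD : (univ.filter (fun e => e ∈ D)) = D := by ext e; simp
  have h4 := card_filter_add_card_filter_not
    (s := (univ : Finset (Sym2 (Fin k)))) (p := fun e => e ∈ D)
  rw [hfiltD, hDcard, card_univ] at h4
  congr 1
  omega

lemma not_ramsey {m k : ℕ} (hm : 3 ≤ m) (hk : k ^ 2 ≤ 2 ^ m) : ¬ RamseyProp k ![m, m] := by
  classical
  intro h
  have hmm : ∀ s : Fin 2, ![m, m] s = m := by
    intro s; fin_cases s <;> rfl
  by_cases hkm : k < m
  · obtain ⟨s, S, hcard, -⟩ := h (fun _ => 0)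
    have h1 : S.card ≤ k := by simpa using card_le_univ S
    rw [hmm s] at hcard
    omega
  · push_neg at hkm
    set N := Fintype.card (Sym2 (Fin k)) with hN
    have hNval : N = (k + 1).choose 2 := by
      rw [hN, ← card_univ, ← sym2_univ, card_sym2, card_univ, Fintype.card_fin]
    have hdN : m.choose 2 ≤ N := by
      rw [hNval]
      exact Nat.choose_le_choose 2 (by omega)
    have hsub : (univ : Finset (Sym2 (Fin k) → Fin 2)) ⊆
        (univ ×ˢ univ.powersetCard m).biUnion
          (fun p => univ.filter (fun c => ∀ x ∈ p.2, ∀ y ∈ p.2, x ≠ y → c s(x, y) = p.1)) := by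
      intro c _
      obtain ⟨s, S, hcard, hmono⟩ := h c
      rw [hmm s] at hcard
      exact mem_biUnion.mpr ⟨(s, S), mem_product.mpr ⟨mem_univ _,
        mem_powersetCard.mpr ⟨subset_univ _, hcard⟩⟩, mem_filter.mpr ⟨mem_univ _, hmono⟩⟩
    have hunivcard : (univ : Finset (Sym2 (Fin k) → Fin 2)).card = 2 ^ N := by
      rw [card_univ, Fintype.card_fun, Fintype.card_fin]
    have hchain : 2 ^ N ≤ 2 * k.choose m * 2 ^ (N - m.choose 2) := by
      calc 2 ^ N = (univ : Finset (Sym2 (Fin k) → Fin 2)).card := hunivcard.symm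
      _ ≤ ((univ ×ˢ univ.powersetCard m).biUnion
          (fun p => univ.filter (fun c : Sym2 (Fin k) → Fin 2 =>
            ∀ x ∈ p.2, ∀ y ∈ p.2, x ≠ y → c s(x, y) = p.1))).card :=
        card_le_card hsub
      _ ≤ ∑ p ∈ univ ×ˢ univ.powersetCard m,
          (univ.filter (fun c : Sym2 (Fin k) → Fin 2 =>
            ∀ x ∈ p.2, ∀ y ∈ p.2, x ≠ y → c s(x, y) = p.1)).card :=
        card_biUnion_le
      _ = ∑ p ∈ univ ×ˢ univ.powersetCard m, 2 ^ (N - m.choose 2) := by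
        refine Finset.sum_congr rfl fun p hp => ?_
        obtain ⟨-, hp2⟩ := mem_product.mp hp
        exact card_filter_mono p.1 p.2 (mem_powersetCard.mp hp2).2
      _ = (univ ×ˢ univ.powersetCard m).card * 2 ^ (N - m.choose 2) := by
        rw [Finset.sum_const, smul_eq_mul]
      _ = 2 * k.choose m * 2 ^ (N - m.choose 2) := by
        rw [card_product, card_powersetCard, card_univ, card_univ,
          Fintype.card_fin, Fintype.card_fin]
    have hfin : 2 * k.choose m * 2 ^ (N - m.choose 2) < 2 ^ N := by
      calc 2 * k.choose m * 2 ^ (N - m.choose 2)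
          < 2 ^ (m.choose 2) * 2 ^ (N - m.choose 2) := by
            exact Nat.mul_lt_mul_of_lt_of_le (key_ineq hm hk) (le_refl _)
              (pow_pos (by norm_num : (0:ℕ) < 2) _)
      _ = 2 ^ N := by rw [← pow_add]; congr 1; omega
    exact lt_irrefl _ (lt_of_le_of_lt hchain hfin)

lemma ramsey_nonempty (m : ℕ) : ∃ n, RamseyProp n ![m, m] := by
  obtain ⟨n, h⟩ := ramsey_exists m m
  refine ⟨n + 1, fun c => ?_⟩
  set f : ℕ → Fin (n + 1) := fun x => if h : x < n + 1 then ⟨x, h⟩ else 0 with hf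
  have hfval : ∀ x < n + 1, (f x : ℕ) = x := by
    intro x hx; simp [hf, Nat.lt_succ_iff.mp hx]
  obtain ⟨S, hSV, hS⟩ := h (range (n + 1)) (fun e => c (Sym2.map f e)) (by simp)
  have hinj : Set.InjOn f ↑S := by
    intro x hx y hy hxy
    have hx' := mem_range.mp (hSV hx)
    have hy' := mem_range.mp (hSV hy)
    have := congrArg (fun t : Fin (n+1) => (t : ℕ)) hxy
    simpa [hfval x hx', hfval y hy'] using this
  have key : ∀ (s : Fin 2), (S.card = m ∧ (∀ x ∈ S, ∀ y ∈ S, x ≠ y →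
      c (Sym2.map f s(x, y)) = s)) → ∃ s' : Fin 2, ∃ T : Finset (Fin (n+1)),
      T.card = ![m,m] s' ∧ ∀ x ∈ T, ∀ y ∈ T, x ≠ y → c s(x, y) = s' := by
    rintro s ⟨hcard, hmono⟩
    refine ⟨s, S.image f, ?_, ?_⟩
    · rw [card_image_of_injOn hinj, hcard]
      fin_cases s <;> rfl
    · intro u hu v hv huv
      obtain ⟨x, hx, rfl⟩ := mem_image.mp hu
      obtain ⟨y, hy, rfl⟩ := mem_image.mp hv
      have hxy : x ≠ y := fun h => huv (by rw [h])
      have := hmono x hx y hy hxy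
      rwa [Sym2.map_pair_eq] at this
  rcases hS with h' | h'
  · exact key 0 ⟨h'.1, h'.2⟩
  · exact key 1 ⟨h'.1, h'.2⟩

/-- Erdős: for every `m ≥ 3`, `R(m, m) > 2^{m/2}`, i.e. `R(m, m)² > 2^m`. -/
theorem erdos_lower_bound (m : ℕ) (hm : 3 ≤ m) :
    (ramseyNumber ![m, m]) ^ 2 > 2 ^ m := by
  have hne : {n | RamseyProp n ![m, m]}.Nonempty := ramsey_nonempty m
  have hmem : ramseyNumber ![m, m] ∈ {n | RamseyProp n ![m, m]} := Nat.sInf_mem hne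
  by_contra hle
  push_neg at hle
  exact not_ramsey hm hle hmem
end

section
/- For all integers r, s ≥ 1 and m ≥ 2, the diagonal multicolor Ramsey numbers satisfy R_{r+s}(m) > (R_r(m) − 1)·(R_s(m) − 1). -/
open Finset


private lemma greedy {n k : ℕ} (hk : 0 < k) (c : Sym2 (Fin n) → Fin k) :
    ∀ (L : ℕ) (S : Finset (Fin n)), (k+1)^L ≤ S.card →
      ∃ p : List (Fin n × Fin k), p.length = L ∧ (∀ q ∈ p, q.1 ∈ S) ∧
        p.Pairwise (fun a b => a.1 ≠ b.1 ∧ c s(a.1, b.1) = a.2) := by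
  intro L
  induction L with
  | zero => intro S _; exact ⟨[], rfl, by simp, by simp⟩
  | succ L ih =>
    intro S hS
    have hSne : S.Nonempty := card_pos.mp (lt_of_lt_of_le (by positivity) hS)
    obtain ⟨v, hv⟩ := hSne
    have hcard : (k+1)^(L+1) - 1 ≤ (S.erase v).card := by
      rw [card_erase_of_mem hv]; omega
    have hsum : (S.erase v).card
        = ∑ t : Fin k, ((S.erase v).filter (fun u => c s(v,u) = t)).card :=
      card_eq_sum_card_fiberwise (fun u _ => mem_univ _)
    have hex : ∃ t : Fin k, (k+1)^L ≤ ((S.erase v).filter (fun u => c s(v,u) = t)).card := by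
      by_contra h
      push_neg at h
      have hb : ∀ t ∈ (univ : Finset (Fin k)),
          ((S.erase v).filter (fun u => c s(v,u) = t)).card ≤ (k+1)^L - 1 := by
        intro t _; have := h t; omega
      have hle := Finset.sum_le_card_nsmul univ _ _ hb
      simp only [card_univ, Fintype.card_fin, smul_eq_mul] at hle
      have hP : 1 ≤ (k+1)^L := Nat.one_le_pow _ _ (by omega)
      have hmul : k * ((k+1)^L - 1) + k = k * (k+1)^L := by
        rw [← Nat.mul_succ]; congr 1; omega
      have hpow : (k+1)^(L+1) = k * (k+1)^L + (k+1)^L := by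
        rw [pow_succ]; ring
      omega
    obtain ⟨t, ht⟩ := hex
    obtain ⟨p, hlen, hmem, hpw⟩ := ih _ ht
    refine ⟨(v, t) :: p, by simp [hlen], ?_, ?_⟩
    · rintro q hq
      rcases List.mem_cons.mp hq with rfl | hq
      · exact hv
      · exact mem_of_mem_erase (mem_filter.mp (hmem q hq)).1
    · rw [List.pairwise_cons]
      refine ⟨?_, hpw⟩
      intro b hb
      have hbf := mem_filter.mp (hmem b hb)
      exact ⟨fun h => (mem_erase.mp hbf.1).1 h.symm, hbf.2⟩

private lemma ramsey_exists_s3 {k m : ℕ} (hk : 0 < k) (hm : 1 ≤ m) :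
    RamseyProp ((k+1)^(k*(m-1)+1)) (fun _ : Fin k => m) := by
  intro c
  obtain ⟨p, hlen, -, hpw⟩ := greedy hk c (k*(m-1)+1) univ (by simp)
  have hnd : p.Nodup := hpw.imp (fun h hab => h.1 (congrArg Prod.fst hab))
  set P := p.toFinset with hP
  have hPcard : P.card = k*(m-1)+1 := by
    rw [hP, List.toFinset_card_of_nodup hnd, hlen]
  have hsum : P.card = ∑ t : Fin k, (P.filter (fun q => q.2 = t)).card :=
    card_eq_sum_card_fiberwise (fun u _ => mem_univ _)
  have hex : ∃ t : Fin k, m ≤ (P.filter (fun q => q.2 = t)).card := by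
    by_contra h
    push_neg at h
    have hb : ∀ t ∈ (univ : Finset (Fin k)),
        (P.filter (fun q => q.2 = t)).card ≤ m - 1 := by
      intro t _; have := h t; omega
    have hle := Finset.sum_le_card_nsmul univ _ _ hb
    simp only [card_univ, Fintype.card_fin, smul_eq_mul] at hle
    omega
  obtain ⟨t, ht⟩ := hex
  obtain ⟨T, hTsub, hTcard⟩ := Finset.exists_subset_card_eq ht
  have hTmem : ∀ a ∈ T, a ∈ p ∧ a.2 = t := by
    intro a ha
    have := mem_filter.mp (hTsub ha)
    exact ⟨List.mem_toFinset.mp this.1, this.2⟩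
  have hsymm : Symmetric (fun a b : Fin ((k+1)^(k*(m-1)+1)) × Fin k => a.1 ≠ b.1 ∧
      (c s(a.1, b.1) = a.2 ∨ c s(a.1, b.1) = b.2)) := by
    intro a b h
    refine ⟨h.1.symm, ?_⟩
    rw [Sym2.eq_swap]
    exact h.2.symm
  haveI : Std.Symm (fun a b : Fin ((k+1)^(k*(m-1)+1)) × Fin k => a.1 ≠ b.1 ∧
      (c s(a.1, b.1) = a.2 ∨ c s(a.1, b.1) = b.2)) := ⟨fun a b h => hsymm h⟩
  have hpw' := (hpw.imp (fun {a b} h => (⟨h.1, Or.inl h.2⟩ :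
    a.1 ≠ b.1 ∧ (c s(a.1, b.1) = a.2 ∨ c s(a.1, b.1) = b.2)))).forall
  have key : ∀ a ∈ T, ∀ b ∈ T, a ≠ b → a.1 ≠ b.1 ∧ c s(a.1, b.1) = t := by
    intro a ha b hb hab
    obtain ⟨hap, hat⟩ := hTmem a ha
    obtain ⟨hbp, hbt⟩ := hTmem b hb
    have := hpw' hap hbp hab
    refine ⟨this.1, ?_⟩
    rcases this.2 with h | h
    · rw [h, hat]
    · rw [h, hbt]
  refine ⟨t, T.image Prod.fst, ?_, ?_⟩
  · rw [card_image_of_injOn, hTcard]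
    intro a ha b hb hfst
    by_contra hab
    exact (key a ha b hb hab).1 hfst
  · intro x hx y hy hxy
    obtain ⟨a, ha, rfl⟩ := mem_image.mp hx
    obtain ⟨b, hb, rfl⟩ := mem_image.mp hy
    have hab : a ≠ b := fun h => hxy (congrArg Prod.fst h)
    exact (key a ha b hb hab).2

private lemma ramsey_mono {r : ℕ} {i : Fin r → ℕ} {n n' : ℕ} (h : n ≤ n')
    (H : RamseyProp n i) : RamseyProp n' i := by
  intro c
  obtain ⟨t, S, hcard, hmono⟩ := H (fun e => c (e.map (Fin.castLE h)))
  refine ⟨t, S.map ⟨Fin.castLE h, Fin.castLE_injective h⟩, by simp [hcard], ?_⟩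
  intro x hx y hy hxy
  simp only [mem_map, Function.Embedding.coeFn_mk] at hx hy
  obtain ⟨a, ha, rfl⟩ := hx
  obtain ⟨b, hb, rfl⟩ := hy
  have hab : a ≠ b := fun e => hxy (by rw [e])
  have := hmono a ha b hb hab
  simpa [Sym2.map_pair_eq] using this

private lemma not_ramsey_zero {r m : ℕ} (hm : 1 ≤ m) :
    ¬ RamseyProp 0 (fun _ : Fin r => m) := by
  intro H
  obtain ⟨t, S, hcard, -⟩ :=
    H (Sym2.lift ⟨fun x _ => x.elim0, fun x _ => x.elim0⟩)
  have h0 : S.card ≤ 0 := le_trans (card_le_univ S) (by simp)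
  have hcm : S.card = m := hcard
  omega

private lemma not_ramsey_pred {r m : ℕ} (hm : 1 ≤ m) :
    ¬ RamseyProp (ramseyNumber (fun _ : Fin r => m) - 1) (fun _ : Fin r => m) := by
  intro H
  have h1 : ramseyNumber (fun _ : Fin r => m) ≤ ramseyNumber (fun _ : Fin r => m) - 1 :=
    Nat.sInf_le H
  have h0 : ramseyNumber (fun _ : Fin r => m) - 1 = 0 := by omega
  rw [h0] at H
  exact not_ramsey_zero hm H

private lemma product_coloring {r s m a b : ℕ} (hm : 2 ≤ m)
    (h1 : ¬ RamseyProp a (fun _ : Fin r => m))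
    (h2 : ¬ RamseyProp b (fun _ : Fin s => m)) :
    ¬ RamseyProp (a * b) (fun _ : Fin (r + s) => m) := by
  unfold RamseyProp at h1 h2
  push_neg at h1 h2
  obtain ⟨c1, hc1⟩ := h1
  obtain ⟨c2, hc2⟩ := h2
  intro H
  let e : Fin (a * b) ≃ Fin a × Fin b := finProdFinEquiv.symm
  have hf : ∀ x y : Fin (a * b),
      (if (e x).1 = (e y).1 then Fin.natAdd r (c2 s((e x).2, (e y).2))
        else Fin.castAdd s (c1 s((e x).1, (e y).1)))
      = (if (e y).1 = (e x).1 then Fin.natAdd r (c2 s((e y).2, (e x).2))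
        else Fin.castAdd s (c1 s((e y).1, (e x).1))) := by
    intro x y
    by_cases h : (e x).1 = (e y).1
    · rw [if_pos h, if_pos h.symm, Sym2.eq_swap]
    · rw [if_neg h, if_neg (fun hh => h hh.symm), Sym2.eq_swap]
  let c : Sym2 (Fin (a * b)) → Fin (r + s) :=
    Sym2.lift ⟨fun x y => if (e x).1 = (e y).1 then Fin.natAdd r (c2 s((e x).2, (e y).2))
      else Fin.castAdd s (c1 s((e x).1, (e y).1)), hf⟩
  obtain ⟨t, S, hcard, hmono⟩ := H c
  have hc : ∀ x y : Fin (a * b), c s(x, y)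
      = if (e x).1 = (e y).1 then Fin.natAdd r (c2 s((e x).2, (e y).2))
        else Fin.castAdd s (c1 s((e x).1, (e y).1)) := fun x y => rfl
  by_cases htr : (t : ℕ) < r
  · -- color lives in the first block
    have hinj : ∀ x ∈ S, ∀ y ∈ S, (e x).1 = (e y).1 → x = y := by
      intro x hx y hy hfst
      by_contra hxy
      have := hmono x hx y hy hxy
      rw [hc, if_pos hfst] at this
      have : r + (c2 s((e x).2, (e y).2) : ℕ) = (t : ℕ) := congrArg Fin.val this
      omega
    obtain ⟨x0, hx0, y0, hy0, hxy0, hne⟩ := hc1 ⟨t, htr⟩ (S.image (fun x => (e x).1))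
      (by rw [card_image_of_injOn, hcard]; intro x hx y hy hh; exact hinj x hx y hy hh)
    obtain ⟨x, hx, rfl⟩ := mem_image.mp hx0
    obtain ⟨y, hy, rfl⟩ := mem_image.mp hy0
    have hxyne : x ≠ y := fun h => hxy0 (by rw [h])
    have := hmono x hx y hy hxyne
    rw [hc, if_neg hxy0] at this
    exact hne (Fin.ext (by simpa using congrArg Fin.val this))
  · -- color lives in the second block
    have hfsteq : ∀ x ∈ S, ∀ y ∈ S, x ≠ y → (e x).1 = (e y).1 := by
      intro x hx y hy hxy
      by_contra hfst
      have := hmono x hx y hy hxy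
      rw [hc, if_neg hfst] at this
      have h' : (c1 s((e x).1, (e y).1) : ℕ) = (t : ℕ) := congrArg Fin.val this
      have := (c1 s((e x).1, (e y).1)).isLt
      omega
    have hts : (t : ℕ) - r < s := by have := t.isLt; omega
    have hinj : ∀ x ∈ S, ∀ y ∈ S, (e x).2 = (e y).2 → x = y := by
      intro x hx y hy hsnd
      by_contra hxy
      have hfst := hfsteq x hx y hy hxy
      exact hxy (e.injective (Prod.ext hfst hsnd))
    obtain ⟨x0, hx0, y0, hy0, hxy0, hne⟩ := hc2 ⟨(t : ℕ) - r, hts⟩ (S.image (fun x => (e x).2))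
      (by rw [card_image_of_injOn, hcard]; intro x hx y hy hh; exact hinj x hx y hy hh)
    obtain ⟨x, hx, rfl⟩ := mem_image.mp hx0
    obtain ⟨y, hy, rfl⟩ := mem_image.mp hy0
    have hxyne : x ≠ y := fun h => hxy0 (by rw [h])
    have := hmono x hx y hy hxyne
    rw [hc, if_pos (hfsteq x hx y hy hxyne)] at this
    have h' : r + (c2 s((e x).2, (e y).2) : ℕ) = (t : ℕ) := congrArg Fin.val this
    exact hne (Fin.ext (by simp; omega))

/-- Min: for `r, s ≥ 1` and `m ≥ 2`, `R_{r+s}(m) > (R_r(m) - 1) * (R_s(m) - 1)`. -/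
theorem diagonal_ramsey_product_lower_bound (r s m : ℕ) (hr : 1 ≤ r) (hs : 1 ≤ s)
    (hm : 2 ≤ m) :
    ramseyNumber (fun _ : Fin (r + s) => m) >
      (ramseyNumber (fun _ : Fin r => m) - 1) * (ramseyNumber (fun _ : Fin s => m) - 1) := by
  have hnot : ¬ RamseyProp ((ramseyNumber (fun _ : Fin r => m) - 1) *
      (ramseyNumber (fun _ : Fin s => m) - 1)) (fun _ : Fin (r + s) => m) :=
    product_coloring hm (not_ramsey_pred (by omega)) (not_ramsey_pred (by omega))
  have hex : RamseyProp ((r+s+1)^((r+s)*(m-1)+1)) (fun _ : Fin (r+s) => m) :=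
    ramsey_exists_s3 (by omega) (by omega)
  have hne : {n | RamseyProp n (fun _ : Fin (r+s) => m)}.Nonempty := ⟨_, hex⟩
  have hmem : RamseyProp (ramseyNumber (fun _ : Fin (r+s) => m)) (fun _ : Fin (r+s) => m) :=
    Nat.sInf_mem hne
  by_contra hle
  push_neg at hle
  exact hnot (ramsey_mono hle hmem)
end

section
/- For all integers m ≥ 1 and r ≥ 1, the (r+1)-color Ramsey number with one entry m and r entries equal to 3 satisfies R(m, 3, …, 3; r+1) ≤ r! · m^{r+1}. -/
lemma cons_of_ne_zero {k m : ℕ} (x : Fin (k+1)) (hx : x ≠ 0) :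
    (Fin.cons m (fun _ : Fin k => (3:ℕ)) : Fin (k+1) → ℕ) x = 3 := by
  cases x using Fin.cases with
  | zero => exact absurd rfl hx
  | succ u => simp

lemma consval {r : ℕ} (m : ℕ) (s : Fin (r+1)) (t : Fin (r+1)) :
    (Fin.cons m (fun _ : Fin (r+1) => (3:ℕ)) : Fin (r+2) → ℕ) (s.succ.succAbove t) =
      (Fin.cons m (fun _ : Fin r => (3:ℕ)) : Fin (r+1) → ℕ) t := by
  have h0 : s.succ.succAbove 0 = 0 := by
    rw [Fin.succAbove_of_castSucc_lt _ _ (by simp [Fin.succ_pos]), Fin.castSucc_zero]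
  cases t using Fin.cases with
  | zero => rw [h0]; simp
  | succ u =>
    have hne : s.succ.succAbove u.succ ≠ 0 := by
      rw [← h0]
      intro h
      exact (Fin.succ_ne_zero u) (Fin.succAbove_right_injective h)
    rw [cons_of_ne_zero _ hne, Fin.cons_succ]

lemma transfer {N r k : ℕ} {i : Fin r → ℕ} (hk : RamseyProp k i)
    (c : Sym2 (Fin N) → Fin r) (S : Finset (Fin N)) (hS : k ≤ S.card) :
    ∃ s : Fin r, ∃ T : Finset (Fin N), T ⊆ S ∧ T.card = i s ∧
      ∀ x ∈ T, ∀ y ∈ T, x ≠ y → c s(x, y) = s := by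
  obtain ⟨S', hsub, hcard⟩ := Finset.exists_subset_card_eq hS
  let e := S'.orderIsoOfFin hcard
  have hinj : Function.Injective (fun a : Fin k => (e a : Fin N)) :=
    fun a b hab => e.injective (Subtype.ext hab)
  obtain ⟨s, T, hTcard, hTmono⟩ := hk (fun p => c (p.map (fun a => (e a : Fin N))))
  refine ⟨s, T.image (fun a => (e a : Fin N)), ?_, ?_, ?_⟩
  · intro x hx
    obtain ⟨a, _, rfl⟩ := Finset.mem_image.mp hx
    exact hsub (e a).2
  · rw [Finset.card_image_of_injective _ hinj, hTcard]
  · intro x hx y hy hxy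
    obtain ⟨a, ha, rfl⟩ := Finset.mem_image.mp hx
    obtain ⟨b, hb, rfl⟩ := Finset.mem_image.mp hy
    have hab : a ≠ b := fun h => hxy (by rw [h])
    have h := hTmono a ha b hb hab
    simp only [Sym2.map_pair_eq] at h
    exact h

lemma greedy_s6 {V : Type*} [DecidableEq V] (g : V → V → Prop) [DecidableRel g]
    (hsym : ∀ x y, g x y → g y x) (t : ℕ) :
    ∀ (n : ℕ) (A : Finset V), A.card ≤ n →
      (∀ v ∈ A, (A.filter (fun u => u = v ∨ ¬ g v u)).card ≤ t) →
      ∃ S ⊆ A, A.card ≤ t * S.card ∧ ∀ x ∈ S, ∀ y ∈ S, x ≠ y → g x y := by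
  intro n
  induction n with
  | zero =>
    intro A hA _
    exact ⟨∅, Finset.empty_subset _, by simpa using hA, by simp⟩
  | succ n ih =>
    intro A hA hdeg
    rcases A.eq_empty_or_nonempty with rfl | ⟨v, hv⟩
    · exact ⟨∅, by simp, by simp, by simp⟩
    · set A' := A.filter (fun u => g v u ∧ u ≠ v) with hA'
      have hA'sub : A' ⊆ A := Finset.filter_subset _ _
      have hvA' : v ∉ A' := by simp [hA']
      have hA'card : A'.card ≤ n := by
        have hss : A' ⊂ A := ⟨hA'sub, fun h => hvA' (h hv)⟩
        have := Finset.card_lt_card hss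
        omega
      have hdeg' : ∀ u ∈ A', (A'.filter (fun w => w = u ∨ ¬ g u w)).card ≤ t := by
        intro u hu
        refine le_trans (Finset.card_le_card ?_) (hdeg u (hA'sub hu))
        exact Finset.filter_subset_filter _ hA'sub
      obtain ⟨S', hS'sub, hS'bound, hS'mono⟩ := ih A' hA'card hdeg'
      have hvS' : v ∉ S' := fun h => hvA' (hS'sub h)
      refine ⟨insert v S', ?_, ?_, ?_⟩
      · intro x hx
        rcases Finset.mem_insert.mp hx with rfl | hx
        · exact hv
        · exact hA'sub (hS'sub hx)
      · rw [Finset.card_insert_of_notMem hvS', Nat.mul_add, Nat.mul_one]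
        have hsub2 : A ⊆ A' ∪ A.filter (fun u => u = v ∨ ¬ g v u) := by
          intro u hu
          by_cases h : g v u ∧ u ≠ v
          · exact Finset.mem_union_left _ (Finset.mem_filter.mpr ⟨hu, h⟩)
          · refine Finset.mem_union_right _ (Finset.mem_filter.mpr ⟨hu, ?_⟩)
            tauto
        have hle : A.card ≤ A'.card + t := by
          calc A.card ≤ _ := Finset.card_le_card hsub2
            _ ≤ A'.card + _ := Finset.card_union_le _ _
            _ ≤ A'.card + t := by have := hdeg v hv; omega
        omega
      · intro x hx y hy hxy
        rcases Finset.mem_insert.mp hx with hx1 | hx1 <;>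
          rcases Finset.mem_insert.mp hy with hy1 | hy1
        · exact absurd (hx1.trans hy1.symm) hxy
        · subst hx1; exact (Finset.mem_filter.mp (hS'sub hy1)).2.1
        · subst hy1; exact hsym _ _ (Finset.mem_filter.mp (hS'sub hx1)).2.1
        · exact hS'mono x hx1 y hy1 hxy

lemma key (m : ℕ) (hm : 1 ≤ m) (r : ℕ) :
    RamseyProp (Nat.factorial r * m ^ (r+1)) (Fin.cons m (fun _ : Fin r => 3)) := by
  induction r with
  | zero =>
    intro c
    refine ⟨0, Finset.univ, ?_, ?_⟩
    · rw [Finset.card_univ, Fintype.card_fin]; simp [Nat.factorial]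
    · intro x _ y _ _
      apply Fin.ext
      have := (c s(x, y)).isLt
      omega
  | succ r ih =>
    intro c
    classical
    set f := Nat.factorial r * m ^ (r+1) with hf
    have hf1 : 1 ≤ f := Nat.mul_pos (Nat.factorial_pos r) (Nat.one_le_pow _ _ hm)
    by_cases h1 : ∃ v, ∃ s : Fin (r+1),
        f ≤ (Finset.univ.filter (fun u => u ≠ v ∧ c s(v, u) = s.succ)).card
    · obtain ⟨v, s, hN⟩ := h1
      set Nv := Finset.univ.filter (fun u => u ≠ v ∧ c s(v, u) = s.succ) with hNvdef
      have hmem : ∀ u, u ∈ Nv ↔ (u ≠ v ∧ c s(v, u) = s.succ) := by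
        intro u; simp [hNvdef]
      by_cases h2 : ∃ x ∈ Nv, ∃ y ∈ Nv, x ≠ y ∧ c s(x, y) = s.succ
      · obtain ⟨x, hx, y, hy, hxy, hcxy⟩ := h2
        obtain ⟨hxv, hcx⟩ := (hmem x).mp hx
        obtain ⟨hyv, hcy⟩ := (hmem y).mp hy
        have hvx : v ≠ x := fun h => hxv h.symm
        have hvy : v ≠ y := fun h => hyv h.symm
        refine ⟨s.succ, {v, x, y}, ?_, ?_⟩
        · rw [Fin.cons_succ]
          rw [Finset.card_insert_of_notMem (by simp [hvx, hvy]),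
            Finset.card_insert_of_notMem (by simp [hxy]), Finset.card_singleton]
        · intro a ha b hb hab
          simp only [Finset.mem_insert, Finset.mem_singleton] at ha hb
          rcases ha with rfl | rfl | rfl <;> rcases hb with rfl | rfl | rfl <;>
            first
              | exact absurd rfl hab
              | assumption
              | (rw [Sym2.eq_swap]; assumption)
      · push_neg at h2
        set c' : Sym2 (Fin (Nat.factorial (r+1) * m ^ (r+1+1))) → Fin (r+1) := fun p =>
          if h : ∃ u, (s.succ).succAbove u = c p then h.choose else 0 with hc'def
        obtain ⟨t, T, hTsub, hTcard, hTmono⟩ := transfer ih c' Nv hN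
        refine ⟨s.succ.succAbove t, T, ?_, ?_⟩
        · rw [hTcard]; exact (consval m s t).symm
        · intro x hx y hy hxy
          have hne : c s(x, y) ≠ s.succ := h2 x (hTsub hx) y (hTsub hy) hxy
          have hex : ∃ u, (s.succ).succAbove u = c s(x, y) :=
            Fin.exists_succAbove_eq hne
          have hc' : c' s(x, y) = t := hTmono x hx y hy hxy
          rw [hc'def] at hc'
          simp only [dif_pos hex] at hc'
          rw [← hc']
          exact hex.choose_spec.symm
    · push_neg at h1
      have hsym : ∀ x y : Fin (Nat.factorial (r+1) * m ^ (r+1+1)),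
          c s(x, y) = 0 → c s(y, x) = 0 := by
        intro x y h
        rwa [Sym2.eq_swap]
      have hdeg : ∀ v ∈ (Finset.univ : Finset (Fin (Nat.factorial (r+1) * m ^ (r+1+1)))),
          (Finset.univ.filter (fun u => u = v ∨ ¬ c s(v, u) = 0)).card ≤ (r+1) * f := by
        intro v _
        have hsub : Finset.univ.filter (fun u => u = v ∨ ¬ c s(v, u) = 0) ⊆
            insert v ((Finset.univ : Finset (Fin (r+1))).biUnion
              (fun s => Finset.univ.filter (fun u => u ≠ v ∧ c s(v, u) = s.succ))) := by
          intro u hu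
          simp only [Finset.mem_filter, Finset.mem_univ, true_and] at hu
          by_cases huv : u = v
          · subst huv; exact Finset.mem_insert_self _ _
          · have hc : c s(v, u) ≠ 0 := by
              rcases hu with rfl | hc
              · exact absurd rfl huv
              · exact hc
            refine Finset.mem_insert_of_mem (Finset.mem_biUnion.mpr
              ⟨(c s(v, u)).pred hc, Finset.mem_univ _, ?_⟩)
            simp [huv, Fin.succ_pred]
        have hb : ∀ s' : Fin (r+1),
            (Finset.univ.filter (fun u => u ≠ v ∧ c s(v, u) = s'.succ)).card ≤ f - 1 := by
          intro s'
          have := h1 v s'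
          omega
        have h2 := Finset.card_le_card hsub
        have h3 := Finset.card_insert_le v ((Finset.univ : Finset (Fin (r+1))).biUnion
          (fun s => Finset.univ.filter (fun u => u ≠ v ∧ c s(v, u) = s.succ)))
        have h4 := Finset.card_biUnion_le (s := (Finset.univ : Finset (Fin (r+1))))
          (t := fun s => Finset.univ.filter (fun u => u ≠ v ∧ c s(v, u) = s.succ))
        have h5 : ∑ s' : Fin (r+1),
            (Finset.univ.filter (fun u => u ≠ v ∧ c s(v, u) = s'.succ)).card ≤
            ∑ _s' : Fin (r+1), (f - 1) := Finset.sum_le_sum (fun s' _ => hb s')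
        rw [Finset.sum_const, Finset.card_univ, Fintype.card_fin, smul_eq_mul] at h5
        have h6 : (r+1) * (f-1) + (r+1) = (r+1) * f := by
          rw [← Nat.mul_succ]
          congr 1
          omega
        omega
      obtain ⟨S, hSsub, hSbound, hSmono⟩ := greedy_s6 (fun v u => c s(v, u) = 0) hsym
        ((r+1) * f) (Finset.univ.card) Finset.univ le_rfl hdeg
      have hcardn : (Finset.univ : Finset (Fin (Nat.factorial (r+1) * m ^ (r+1+1)))).card =
          (r+1) * f * m := by
        rw [Finset.card_univ, Fintype.card_fin, hf, Nat.factorial_succ]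
        ring
      have hm' : m ≤ S.card := by
        rw [hcardn] at hSbound
        have hpos : 0 < (r+1) * f := Nat.mul_pos (Nat.succ_pos r) hf1
        exact Nat.le_of_mul_le_mul_left hSbound hpos
      obtain ⟨T, hTsub, hTcard⟩ := Finset.exists_subset_card_eq hm'
      refine ⟨0, T, ?_, ?_⟩
      · rw [hTcard]; simp
      · intro x hx y hy hxy
        exact hSmono x (hTsub hx) y (hTsub hy) hxy

/-- Sárközy: for `m ≥ 1` and `r ≥ 1`, `R(m, 3, …, 3; r+1) ≤ r! * m^{r+1}`,
where `3` is repeated `r` times. -/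
theorem sarkozy_upper_bound (m r : ℕ) (hm : 1 ≤ m) (hr : 1 ≤ r) :
    ramseyNumber (Fin.cons m (fun _ : Fin r => 3)) ≤ Nat.factorial r * m ^ (r + 1) := by
  exact Nat.sInf_le (key m hm r)
end

section
/- Let a_1, …, a_6 be vectors in a complex inner product space E and b_1, …, b_6 vectors in a complex inner product space F such that for all i ≠ j, either ⟪a_i, a_j⟫ = 0 or ⟪b_i, b_j⟫ = 0. Then there exist three indices i < j < k such that a_i, a_j, a_k are pairwise orthogonal, or there exist three indices i < j < k such that b_i, b_j, b_k are pairwise orthogonal. -/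
private lemma shu_step {A B : Fin 6 → Fin 6 → Prop}
    (h : ∀ i j, i ≠ j → A i j ∨ B i j)
    {p i j k : Fin 6}
    (h1 : A p i) (h2 : A p j) (h3 : A p k)
    (hij : i ≠ j) (hik : i ≠ k) (hjk : j ≠ k)
    (hpi : p ≠ i) (hpj : p ≠ j) (hpk : p ≠ k) :
    (∃ x y z, x ≠ y ∧ x ≠ z ∧ y ≠ z ∧ A x y ∧ A x z ∧ A y z) ∨
      (∃ x y z, x ≠ y ∧ x ≠ z ∧ y ≠ z ∧ B x y ∧ B x z ∧ B y z) := by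
  by_cases hAij : A i j
  · exact Or.inl ⟨p, i, j, hpi, hpj, hij, h1, h2, hAij⟩
  by_cases hAik : A i k
  · exact Or.inl ⟨p, i, k, hpi, hpk, hik, h1, h3, hAik⟩
  by_cases hAjk : A j k
  · exact Or.inl ⟨p, j, k, hpj, hpk, hjk, h2, h3, hAjk⟩
  exact Or.inr ⟨i, j, k, hij, hik, hjk,
    (h i j hij).resolve_left hAij,
    (h i k hik).resolve_left hAik,
    (h j k hjk).resolve_left hAjk⟩

private lemma shu_core {A B : Fin 6 → Fin 6 → Prop}
    (h : ∀ i j, i ≠ j → A i j ∨ B i j) :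
    (∃ x y z, x ≠ y ∧ x ≠ z ∧ y ≠ z ∧ A x y ∧ A x z ∧ A y z) ∨
      (∃ x y z, x ≠ y ∧ x ≠ z ∧ y ≠ z ∧ B x y ∧ B x z ∧ B y z) := by
  have h' : ∀ i j, i ≠ j → B i j ∨ A i j := fun i j hij => (h i j hij).symm
  rcases h 0 1 (by decide) with h1 | h1 <;>
  rcases h 0 2 (by decide) with h2 | h2 <;>
  rcases h 0 3 (by decide) with h3 | h3 <;>
  rcases h 0 4 (by decide) with h4 | h4 <;>
  rcases h 0 5 (by decide) with h5 | h5 <;>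
  first
  | exact shu_step h ‹A 0 1› ‹A 0 2› ‹A 0 3› (by decide) (by decide) (by decide) (by decide) (by decide) (by decide)
  | exact shu_step h ‹A 0 1› ‹A 0 2› ‹A 0 4› (by decide) (by decide) (by decide) (by decide) (by decide) (by decide)
  | exact shu_step h ‹A 0 1› ‹A 0 2› ‹A 0 5› (by decide) (by decide) (by decide) (by decide) (by decide) (by decide)
  | exact shu_step h ‹A 0 1› ‹A 0 3› ‹A 0 4› (by decide) (by decide) (by decide) (by decide) (by decide) (by decide)
  | exact shu_step h ‹A 0 1› ‹A 0 3› ‹A 0 5› (by decide) (by decide) (by decide) (by decide) (by decide) (by decide)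
  | exact shu_step h ‹A 0 1› ‹A 0 4› ‹A 0 5› (by decide) (by decide) (by decide) (by decide) (by decide) (by decide)
  | exact shu_step h ‹A 0 2› ‹A 0 3› ‹A 0 4› (by decide) (by decide) (by decide) (by decide) (by decide) (by decide)
  | exact shu_step h ‹A 0 2› ‹A 0 3› ‹A 0 5› (by decide) (by decide) (by decide) (by decide) (by decide) (by decide)
  | exact shu_step h ‹A 0 2› ‹A 0 4› ‹A 0 5› (by decide) (by decide) (by decide) (by decide) (by decide) (by decide)
  | exact shu_step h ‹A 0 3› ‹A 0 4› ‹A 0 5› (by decide) (by decide) (by decide) (by decide) (by decide) (by decide)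
  | exact (shu_step h' ‹B 0 1› ‹B 0 2› ‹B 0 3› (by decide) (by decide) (by decide) (by decide) (by decide) (by decide)).symm
  | exact (shu_step h' ‹B 0 1› ‹B 0 2› ‹B 0 4› (by decide) (by decide) (by decide) (by decide) (by decide) (by decide)).symm
  | exact (shu_step h' ‹B 0 1› ‹B 0 2› ‹B 0 5› (by decide) (by decide) (by decide) (by decide) (by decide) (by decide)).symm
  | exact (shu_step h' ‹B 0 1› ‹B 0 3› ‹B 0 4› (by decide) (by decide) (by decide) (by decide) (by decide) (by decide)).symm
  | exact (shu_step h' ‹B 0 1› ‹B 0 3› ‹B 0 5› (by decide) (by decide) (by decide) (by decide) (by decide) (by decide)).symm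
  | exact (shu_step h' ‹B 0 1› ‹B 0 4› ‹B 0 5› (by decide) (by decide) (by decide) (by decide) (by decide) (by decide)).symm
  | exact (shu_step h' ‹B 0 2› ‹B 0 3› ‹B 0 4› (by decide) (by decide) (by decide) (by decide) (by decide) (by decide)).symm
  | exact (shu_step h' ‹B 0 2› ‹B 0 3› ‹B 0 5› (by decide) (by decide) (by decide) (by decide) (by decide) (by decide)).symm
  | exact (shu_step h' ‹B 0 2› ‹B 0 4› ‹B 0 5› (by decide) (by decide) (by decide) (by decide) (by decide) (by decide)).symm
  | exact (shu_step h' ‹B 0 3› ‹B 0 4› ‹B 0 5› (by decide) (by decide) (by decide) (by decide) (by decide) (by decide)).symm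

private lemma shu_order {A : Fin 6 → Fin 6 → Prop} (hs : ∀ i j, A i j → A j i)
    (h : ∃ x y z, x ≠ y ∧ x ≠ z ∧ y ≠ z ∧ A x y ∧ A x z ∧ A y z) :
    ∃ i j k, i < j ∧ j < k ∧ A i j ∧ A i k ∧ A j k := by
  obtain ⟨x, y, z, hxy, hxz, hyz, h1, h2, h3⟩ := h
  rcases lt_or_gt_of_ne hxy with hxy' | hxy' <;>
  rcases lt_or_gt_of_ne hxz with hxz' | hxz' <;>
  rcases lt_or_gt_of_ne hyz with hyz' | hyz'
  · exact ⟨x, y, z, hxy', hyz', h1, h2, h3⟩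
  · exact ⟨x, z, y, hxz', hyz', h2, h1, hs _ _ h3⟩
  · exact absurd (hxz'.trans hxy') (lt_asymm hyz')
  · exact ⟨z, x, y, hxz', hxy', hs _ _ h2, hs _ _ h3, h1⟩
  · exact ⟨y, x, z, hxy', hxz', hs _ _ h1, h3, h2⟩
  · exact absurd (hxz'.trans hyz') (lt_asymm hxy')
  · exact ⟨y, z, x, hyz', hxz', h3, hs _ _ h1, hs _ _ h2⟩
  · exact ⟨z, y, x, hyz', hxy', hs _ _ h3, hs _ _ h2, hs _ _ h1⟩

/-- Shu's lemma (an instance of `R(3,3) = 6`): if `a_1, …, a_6` and `b_1, …, b_6` are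
vectors in complex inner product spaces such that for all `i ≠ j` either
`⟪a_i, a_j⟫ = 0` or `⟪b_i, b_j⟫ = 0`, then some three of the `a`'s are pairwise
orthogonal or some three of the `b`'s are pairwise orthogonal. -/
theorem six_bipartite_product_states
    {E F : Type*} [NormedAddCommGroup E] [InnerProductSpace ℂ E]
    [NormedAddCommGroup F] [InnerProductSpace ℂ F]
    (a : Fin 6 → E) (b : Fin 6 → F)
    (horth : ∀ i j : Fin 6, i ≠ j →
      (inner ℂ (a i) (a j) : ℂ) = 0 ∨ (inner ℂ (b i) (b j) : ℂ) = 0) :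
    (∃ i j k : Fin 6, i < j ∧ j < k ∧
        (inner ℂ (a i) (a j) : ℂ) = 0 ∧ (inner ℂ (a i) (a k) : ℂ) = 0 ∧
        (inner ℂ (a j) (a k) : ℂ) = 0) ∨
      (∃ i j k : Fin 6, i < j ∧ j < k ∧
        (inner ℂ (b i) (b j) : ℂ) = 0 ∧ (inner ℂ (b i) (b k) : ℂ) = 0 ∧
        (inner ℂ (b j) (b k) : ℂ) = 0) := by
  have := shu_core (A := fun i j => (inner ℂ (a i) (a j) : ℂ) = 0)
    (B := fun i j => (inner ℂ (b i) (b j) : ℂ) = 0) horth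
  rcases this with h | h
  · exact Or.inl (shu_order (fun i j hij => inner_eq_zero_symm.mp hij) h)
  · exact Or.inr (shu_order (fun i j hij => inner_eq_zero_symm.mp hij) h)
end

section
/- For every integer m ≥ 18, the Ramsey numbers satisfy R(m, m, m) ≥ R(m+1, 3, 3) + m. -/
/-- Monotonicity in `n`. -/
lemma RamseyProp.mono {r k n : ℕ} {i : Fin r → ℕ} (h : RamseyProp k i) (hkn : k ≤ n) :
    RamseyProp n i := by
  intro c
  obtain ⟨s, S, hcard, hmono⟩ := h (fun e => c (Sym2.map (Fin.castLE hkn) e))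
  refine ⟨s, S.map (Fin.castLEEmb hkn), by simp [hcard], ?_⟩
  simp only [Finset.mem_map]
  rintro x ⟨a, ha, rfl⟩ y ⟨b, hb, rfl⟩ hxy
  have hab : a ≠ b := by rintro rfl; exact hxy rfl
  have := hmono a ha b hb hab
  simpa [Sym2.map_pair_eq] using this

/-- If some `i s ≤ 1` with `i s ≤ n`, Ramsey holds trivially. -/
lemma ramsey_base {r n : ℕ} {i : Fin r → ℕ} (s : Fin r) (h1 : i s ≤ 1) (hn : i s ≤ n) :
    RamseyProp n i := by
  intro c
  obtain ⟨S, -, hS⟩ := Finset.exists_subset_card_eq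
    (show i s ≤ (Finset.univ : Finset (Fin n)).card by simpa using hn)
  refine ⟨s, S, hS, ?_⟩
  intro x hx y hy hxy
  exact absurd (Finset.card_le_one.mp (hS ▸ h1) x hx y hy) hxy

/-- Relabel colors by a permutation. -/
lemma RamseyProp.perm {r n : ℕ} {j : Fin r → ℕ} (h : RamseyProp n j) (σ : Equiv.Perm (Fin r)) :
    RamseyProp n (j ∘ σ) := by
  intro c
  obtain ⟨s, S, hcard, hmono⟩ := h (fun e => σ (c e))
  refine ⟨σ.symm s, S, by simpa using hcard, ?_⟩
  intro x hx y hy hxy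
  have := hmono x hx y hy hxy
  simp [← this]

/-- Key extension step: a vertex `v` with many neighbors of color `t`. -/
lemma mono_extend {n p : ℕ} {c : Sym2 (Fin n) → Fin 3} {v : Fin n} {t : Fin 3} {j : Fin 3 → ℕ}
    (hR : RamseyProp p j)
    (hA : p ≤ (Finset.univ.filter (fun x => x ≠ v ∧ c s(v, x) = t)).card) :
    ∃ s : Fin 3, ∃ S : Finset (Fin n),
      S.card = j s + (if s = t then 1 else 0) ∧ ∀ x ∈ S, ∀ y ∈ S, x ≠ y → c s(x, y) = s := by
  obtain ⟨T, hTsub, hT⟩ := Finset.exists_subset_card_eq hA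
  set f : Fin p → Fin n := fun k => (T.orderIsoOfFin hT k : Fin n) with hf
  have hfinj : Function.Injective f := fun a b hab => by
    have := (T.orderIsoOfFin hT).injective (Subtype.ext hab); exact this
  have hfmem : ∀ k, f k ≠ v ∧ c s(v, f k) = t := fun k => by
    have : f k ∈ T := (T.orderIsoOfFin hT k).2
    simpa using (Finset.mem_filter.mp (hTsub this)).2
  obtain ⟨s, S, hcard, hmono⟩ := hR (fun e => c (Sym2.map f e))
  have hmapmono : ∀ x ∈ S.map ⟨f, hfinj⟩, ∀ y ∈ S.map ⟨f, hfinj⟩, x ≠ y → c s(x, y) = s := by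
    simp only [Finset.mem_map, Function.Embedding.coeFn_mk]
    rintro x ⟨a, ha, rfl⟩ y ⟨b, hb, rfl⟩ hxy
    have hab : a ≠ b := by rintro rfl; exact hxy rfl
    simpa [Sym2.map_pair_eq] using hmono a ha b hb hab
  by_cases hst : s = t
  · subst hst
    refine ⟨s, insert v (S.map ⟨f, hfinj⟩), ?_, ?_⟩
    · rw [Finset.card_insert_of_notMem, Finset.card_map, hcard]
      · simp
      · simp only [Finset.mem_map, Function.Embedding.coeFn_mk]
        rintro ⟨a, -, ha⟩
        exact (hfmem a).1 ha
    · intro x hx y hy hxy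
      rcases Finset.mem_insert.mp hx with rfl | hx'
      · rcases Finset.mem_insert.mp hy with rfl | hy'
        · exact absurd rfl hxy
        · obtain ⟨b, -, rfl⟩ := Finset.mem_map.mp hy'
          exact (hfmem b).2
      · rcases Finset.mem_insert.mp hy with rfl | hy'
        · obtain ⟨a, -, rfl⟩ := Finset.mem_map.mp hx'
          rw [Sym2.eq_swap]
          exact (hfmem a).2
        · exact hmapmono x hx' y hy' hxy
  · exact ⟨s, S.map ⟨f, hfinj⟩, by simp [hcard, hst], hmapmono⟩

/-- The Erdős–Szekeres style recursion for three colors. -/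
lemma ramsey_step {p q r a b c : ℕ}
    (h0 : RamseyProp (p + 1) ![a, b + 1, c + 1])
    (h1 : RamseyProp (q + 1) ![a + 1, b, c + 1])
    (h2 : RamseyProp (r + 1) ![a + 1, b + 1, c]) :
    RamseyProp (p + q + r + 2) ![a + 1, b + 1, c + 1] := by
  intro col
  have hv : 0 < p + q + r + 2 := by omega
  set v : Fin (p + q + r + 2) := ⟨0, hv⟩ with hvdef
  have hcover : Finset.univ.erase v ⊆
      (Finset.univ.filter (fun x => x ≠ v ∧ col s(v, x) = (0 : Fin 3))) ∪
      (Finset.univ.filter (fun x => x ≠ v ∧ col s(v, x) = (1 : Fin 3))) ∪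
      (Finset.univ.filter (fun x => x ≠ v ∧ col s(v, x) = (2 : Fin 3))) := by
    intro x hx
    have hxv : x ≠ v := (Finset.mem_erase.mp hx).1
    have h3 : ∀ t : Fin 3, t = 0 ∨ t = 1 ∨ t = 2 := by decide
    rcases h3 (col s(v, x)) with h | h | h
    · exact Finset.mem_union_left _ (Finset.mem_union_left _ (by simp [hxv, h]))
    · exact Finset.mem_union_left _ (Finset.mem_union_right _ (by simp [hxv, h]))
    · exact Finset.mem_union_right _ (by simp [hxv, h])
  have hbig :
      p + 1 ≤ (Finset.univ.filter (fun x => x ≠ v ∧ col s(v, x) = (0 : Fin 3))).card ∨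
      q + 1 ≤ (Finset.univ.filter (fun x => x ≠ v ∧ col s(v, x) = (1 : Fin 3))).card ∨
      r + 1 ≤ (Finset.univ.filter (fun x => x ≠ v ∧ col s(v, x) = (2 : Fin 3))).card := by
    by_contra hcon
    push_neg at hcon
    obtain ⟨hc0, hc1, hc2⟩ := hcon
    have hcard : (Finset.univ.erase v).card = p + q + r + 1 := by
      rw [Finset.card_erase_of_mem (Finset.mem_univ v)]; simp
    have hmid := Finset.card_le_card hcover
    have hle := (Finset.card_union_le
      ((Finset.univ.filter (fun x => x ≠ v ∧ col s(v, x) = (0 : Fin 3))) ∪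
        (Finset.univ.filter (fun x => x ≠ v ∧ col s(v, x) = (1 : Fin 3))))
      (Finset.univ.filter (fun x => x ≠ v ∧ col s(v, x) = (2 : Fin 3))))
    have hle2 := Finset.card_union_le
      (Finset.univ.filter (fun x => x ≠ v ∧ col s(v, x) = (0 : Fin 3)))
      (Finset.univ.filter (fun x => x ≠ v ∧ col s(v, x) = (1 : Fin 3)))
    omega
  have conv : ∀ (t : Fin 3) (j : Fin 3 → ℕ),
      (∀ s : Fin 3, j s + (if s = t then 1 else 0) = ![a + 1, b + 1, c + 1] s) →
      (∃ s : Fin 3, ∃ S : Finset (Fin (p + q + r + 2)),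
        S.card = j s + (if s = t then 1 else 0) ∧ ∀ x ∈ S, ∀ y ∈ S, x ≠ y → col s(x, y) = s) →
      ∃ s : Fin 3, ∃ S : Finset (Fin (p + q + r + 2)),
        S.card = ![a + 1, b + 1, c + 1] s ∧ ∀ x ∈ S, ∀ y ∈ S, x ≠ y → col s(x, y) = s := by
    rintro t j hj ⟨s, S, hc, hm⟩
    exact ⟨s, S, by rw [hc, hj], hm⟩
  rcases hbig with hb0 | hb1 | hb2
  · exact conv 0 ![a, b + 1, c + 1] (by intro s; fin_cases s <;> simp) (mono_extend h0 hb0)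
  · exact conv 1 ![a + 1, b, c + 1] (by intro s; fin_cases s <;> simp) (mono_extend h1 hb1)
  · exact conv 2 ![a + 1, b + 1, c] (by intro s; fin_cases s <;> simp) (mono_extend h2 hb2)

/-- `R(a+1,2,2) ≤ a+1`. -/
lemma r22 : ∀ a : ℕ, RamseyProp (a + 1) ![a + 1, 2, 2] := by
  intro a
  induction a with
  | zero => exact ramsey_base 0 (by norm_num) (by norm_num)
  | succ a ih =>
    have h1 : RamseyProp 1 ![a + 2, 1, 2] := ramsey_base 1 (by simp) (by simp)
    have h2 : RamseyProp 1 ![a + 2, 2, 1] := ramsey_base 2 (by simp) (by simp)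
    have := ramsey_step (p := a) (q := 0) (r := 0) ih h1 h2
    simpa using this

def Gb : ℕ → ℕ
  | 0 => 1
  | a + 1 => Gb a + (a + 2)

lemma Gb_pos (a : ℕ) : 1 ≤ Gb a := by
  induction a with
  | zero => simp [Gb]
  | succ a ih => simp [Gb]; omega

/-- `R(a+1,2,3) ≤ Gb a`. -/
lemma r23 : ∀ a : ℕ, RamseyProp (Gb a) ![a + 1, 2, 3] := by
  intro a
  induction a with
  | zero => exact ramsey_base 0 (by norm_num) (by norm_num [Gb])
  | succ a ih =>
    obtain ⟨p, hp⟩ : ∃ p, Gb a = p + 1 := ⟨Gb a - 1, by have := Gb_pos a; omega⟩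
    rw [hp] at ih
    have h1 : RamseyProp 1 ![a + 2, 1, 3] := ramsey_base 1 (by simp) (by simp)
    have h2 : RamseyProp (a + 2) ![a + 2, 2, 2] := r22 (a + 1)
    have := ramsey_step (p := p) (q := 0) (r := a + 1)
      (by exact ih) (by exact h1) (by exact h2)
    have hval : p + 0 + (a + 1) + 2 = Gb (a + 1) := by simp [Gb]; omega
    rw [hval] at this
    exact this

/-- `R(a+1,3,2) ≤ Gb a`. -/
lemma r32 (a : ℕ) : RamseyProp (Gb a) ![a + 1, 3, 2] := by
  have h := (r23 a).perm (Equiv.swap 1 2)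
  have he : (![a + 1, 2, 3] ∘ (Equiv.swap (1 : Fin 3) 2)) = ![a + 1, 3, 2] := by
    funext s; fin_cases s <;> simp [Equiv.swap_apply_def] <;> rfl
  rwa [he] at h

def Hb : ℕ → ℕ
  | 0 => 1
  | a + 1 => Hb a + 2 * Gb (a + 1) - 1

lemma Hb_pos (a : ℕ) : 1 ≤ Hb a := by
  induction a with
  | zero => simp [Hb]
  | succ a ih => have := Gb_pos (a + 1); simp [Hb]; omega

/-- `R(a+1,3,3) ≤ Hb a`. -/
lemma r33 : ∀ a : ℕ, RamseyProp (Hb a) ![a + 1, 3, 3] := by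
  intro a
  induction a with
  | zero => exact ramsey_base 0 (by norm_num) (by norm_num [Hb])
  | succ a ih =>
    obtain ⟨p, hp⟩ : ∃ p, Hb a = p + 1 := ⟨Hb a - 1, by have := Hb_pos a; omega⟩
    obtain ⟨g, hg⟩ : ∃ g, Gb (a + 1) = g + 1 := ⟨Gb (a + 1) - 1, by have := Gb_pos (a + 1); omega⟩
    rw [hp] at ih
    have h1 : RamseyProp (g + 1) ![a + 2, 2, 3] := hg ▸ r23 (a + 1)
    have h2 : RamseyProp (g + 1) ![a + 2, 3, 2] := hg ▸ r32 (a + 1)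
    have := ramsey_step (p := p) (q := g) (r := g) ih h1 h2
    have hval : p + g + g + 2 = Hb (a + 1) := by simp [Hb]; omega
    rw [hval] at this
    exact this

lemma Gb_closed (a : ℕ) : 2 * Gb a = (a + 1) * (a + 2) := by
  induction a with
  | zero => simp [Gb]
  | succ a ih => simp [Gb]; ring_nf; ring_nf at ih; omega

lemma Hb_closed (a : ℕ) : 3 * Hb a + 3 * (a + 1) = (a + 1) * (a + 2) * (a + 3) := by
  induction a with
  | zero => simp [Hb]
  | succ a ih =>
    have hg := Gb_closed (a + 1)
    have hgp := Gb_pos (a + 1)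
    have hb : Hb (a + 1) + 1 = Hb a + 2 * Gb (a + 1) := by
      have hdef : Hb (a + 1) = Hb a + 2 * Gb (a + 1) - 1 := rfl
      omega
    have key : (a + 1 + 1) * (a + 1 + 2) * (a + 1 + 3)
        = ((a + 1) * (a + 2) * (a + 3)) + 3 * ((a + 1 + 1) * (a + 1 + 2)) := by ring
    rw [key, ← ih, ← hg]
    omega

/-- The product-coloring lower bound: no monochromatic `K_m` on `(m-1)^3` vertices. -/
lemma not_ramsey_cube (m : ℕ) (hm : 2 ≤ m) : ¬ RamseyProp ((m - 1) ^ 3) ![m, m, m] := by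
  intro hR
  set n := (m - 1) ^ 3 with hn
  have e : Fin n ≃ Fin (m - 1) × Fin (m - 1) × Fin (m - 1) :=
    Fintype.equivOfCardEq (by simp [hn]; ring)
  set f : Fin n → Fin n → Fin 3 := fun x y =>
    if (e x).1 = (e y).1 then (if (e x).2.1 = (e y).2.1 then 2 else 1) else 0 with hfdef
  have hfsymm : ∀ x y, f x y = f y x := by
    intro x y
    simp only [hfdef]
    by_cases h1 : (e x).1 = (e y).1
    · by_cases h2 : (e x).2.1 = (e y).2.1
      · rw [if_pos h1, if_pos h2, if_pos h1.symm, if_pos h2.symm]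
      · rw [if_pos h1, if_neg h2, if_pos h1.symm, if_neg (fun h => h2 h.symm)]
    · rw [if_neg h1, if_neg (fun h => h1 h.symm)]
  obtain ⟨s, S, hcard, hmono⟩ := hR (Sym2.lift ⟨f, hfsymm⟩)
  have hSm : S.card = m := by
    have : ∀ s : Fin 3, ![m, m, m] s = m := by intro s; fin_cases s <;> rfl
    rw [hcard, this]
  have key : ∃ π : Fin n → Fin (m - 1), Set.InjOn π S := by
    have hc : ∀ x ∈ S, ∀ y ∈ S, x ≠ y → f x y = s := by
      intro x hx y hy hxy
      have := hmono x hx y hy hxy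
      rwa [Sym2.lift_mk] at this
    fin_cases s
    · refine ⟨fun x => (e x).1, ?_⟩
      intro x hx y hy hxy
      by_contra hne
      have := hc x hx y hy hne
      simp only [hfdef] at this
      rw [if_pos hxy] at this
      by_cases h2 : (e x).2.1 = (e y).2.1 <;> simp [h2] at this
    · refine ⟨fun x => (e x).2.1, ?_⟩
      intro x hx y hy hxy
      by_contra hne
      have := hc x hx y hy hne
      simp only [hfdef] at this
      by_cases h1 : (e x).1 = (e y).1
      · rw [if_pos h1, if_pos hxy] at this; exact absurd this (by decide)
      · rw [if_neg h1] at this; exact absurd this (by decide)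
    · refine ⟨fun x => (e x).2.2, ?_⟩
      intro x hx y hy hxy
      by_contra hne
      have := hc x hx y hy hne
      simp only [hfdef] at this
      by_cases h1 : (e x).1 = (e y).1
      · by_cases h2 : (e x).2.1 = (e y).2.1
        · apply hne
          apply e.injective
          exact Prod.ext h1 (Prod.ext h2 hxy)
        · rw [if_pos h1, if_neg h2] at this; exact absurd this (by decide)
      · rw [if_neg h1] at this; exact absurd this (by decide)
  obtain ⟨π, hπ⟩ := key
  have hle : S.card ≤ (Finset.univ : Finset (Fin (m - 1))).card :=
    Finset.card_le_card_of_injOn π (fun _ _ => Finset.mem_univ _) hπ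
  simp [hSm] at hle
  omega

/-- Existence of three-color Ramsey numbers. -/
lemma ramsey_exists_s15 : ∀ k a b c : ℕ, a + b + c ≤ k → ∃ N, RamseyProp N ![a, b, c] := by
  intro k
  induction k with
  | zero =>
    intro a b c h
    have ha : a = 0 := by omega
    subst ha
    exact ⟨0, ramsey_base 0 (by simp) (by simp)⟩
  | succ k ih =>
    intro a b c h
    match a, b, c with
    | 0, b, c => exact ⟨0, ramsey_base 0 (by simp) (by simp)⟩
    | a, 0, c => exact ⟨0, ramsey_base 1 (by simp) (by simp)⟩
    | a, b, 0 => exact ⟨0, ramsey_base 2 (by simp) (by simp)⟩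
    | 1, b + 1, c + 1 => exact ⟨1, ramsey_base 0 (by simp) (by simp)⟩
    | a + 1, 1, c + 1 => exact ⟨1, ramsey_base 1 (by simp) (by simp)⟩
    | a + 1, b + 1, 1 => exact ⟨1, ramsey_base 2 (by simp) (by simp)⟩
    | a + 2, b + 2, c + 2 =>
      obtain ⟨N0, h0⟩ := ih (a + 1) (b + 2) (c + 2) (by omega)
      obtain ⟨N1, h1⟩ := ih (a + 2) (b + 1) (c + 2) (by omega)
      obtain ⟨N2, h2⟩ := ih (a + 2) (b + 2) (c + 1) (by omega)
      exact ⟨N0 + N1 + N2 + 2,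
        ramsey_step (h0.mono (Nat.le_succ N0)) (h1.mono (Nat.le_succ N1))
          (h2.mono (Nat.le_succ N2))⟩

/-- For `m ≥ 18`, `R(m, m, m) ≥ R(m+1, 3, 3) + m`. -/
theorem ramsey_three_color_diag_ge (m : ℕ) (hm : 18 ≤ m) :
    ramseyNumber ![m, m, m] ≥ ramseyNumber ![m + 1, 3, 3] + m := by
  -- upper bound on R(m+1,3,3)
  have hub : ramseyNumber ![m + 1, 3, 3] ≤ Hb m :=
    Nat.sInf_le (r33 m)
  -- lower bound on R(m,m,m)
  have hlb : (m - 1) ^ 3 + 1 ≤ ramseyNumber ![m, m, m] := by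
    obtain ⟨N, hN⟩ := ramsey_exists_s15 (m + m + m) m m m le_rfl
    refine le_csInf ⟨N, hN⟩ ?_
    intro k hk
    by_contra hcon
    push_neg at hcon
    have hk' : RamseyProp k ![m, m, m] := hk
    exact not_ramsey_cube m (by omega) (hk'.mono (by omega))
  -- arithmetic
  have harith : Hb m + m ≤ (m - 1) ^ 3 + 1 := by
    have h := Hb_closed m
    obtain ⟨m', rfl⟩ : ∃ m', m = m' + 18 := ⟨m - 18, by omega⟩
    have h17 : m' + 18 - 1 = m' + 17 := by omega
    rw [h17]
    nlinarith [h]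
  omega
end
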